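/- (Whitney inequality) Let k ∈ ℕ. There exists a constant c = c(k) such that for every F ∈ C[a,b]: if E_{k-1}(F) denotes the error of best uniform approximation of F on [a,b] by polynomials of degree at most k-1, then E_{k-1}(F) ≤ c · ω_k(F, b-a; [a,b]). -/

import Mathlib

open scoped BigOperators

open Classical in
/-- Divided difference with possibly repeated knots, via derivative data `F`
(`F j` is the `j`-th derivative). -/
noncomputable def divDiff (F : ℕ → ℝ → ℝ) : List ℝ → ℝ
  | [] => 0
  | [x] => F 0 x
  | x :: y :: l =>
      if h : ∀ z ∈ y :: l, z = x then
        F ((y :: l).length) x / Nat.factorial ((y :: l).length)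
      else
        (divDiff F (y :: l) -
          divDiff F (x :: (y :: l).eraseIdx ((y :: l).findIdx (fun z => z ≠ x)))) /
          ((y :: l).getD ((y :: l).findIdx (fun z => z ≠ x)) 0 - x)
termination_by l => l.length
decreasing_by
  · simp
  · push_neg at h
    obtain ⟨z, hz, hzx⟩ := h
    have hlt : (y :: l).findIdx (fun z => decide (z ≠ x)) < (y :: l).length :=
      List.findIdx_lt_length_of_exists ⟨z, hz, by simpa using hzx⟩
    simp only [List.length_cons, List.length_eraseIdx] at *
    rw [if_pos hlt]; omega

/-- Newton form of the Hermite interpolation polynomial at the knots `xs`. -/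
noncomputable def newtonSum (F : ℕ → ℝ → ℝ) (xs : List ℝ) (t : ℝ) : ℝ :=
  ∑ j ∈ Finset.range xs.length,
    divDiff F (xs.take (j + 1)) * ∏ i ∈ Finset.range j, (t - xs.getD i 0)

/-- The `k`-th symmetric difference of `g`, set to `0` when the relevant points
leave `[a,b]`. -/
noncomputable def kSymmDiff (k : ℕ) (g : ℝ → ℝ) (u x a b : ℝ) : ℝ :=
  if a ≤ x - (k / 2 : ℝ) * u ∧ x + (k / 2 : ℝ) * u ≤ b then
    ∑ i ∈ Finset.range (k + 1), (-1 : ℝ) ^ i * (k.choose i) * g (x + ((k : ℝ) / 2 - i) * u)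
  else 0

/-- The `k`-th modulus of smoothness of `g` on `[a,b]`. -/
noncomputable def smoothOmega (k : ℕ) (g : ℝ → ℝ) (t a b : ℝ) : ℝ :=
  sSup {v : ℝ | ∃ u x : ℝ, 0 < u ∧ u ≤ t ∧ v = |kSymmDiff k g u x a b|}

/-- First modulus of continuity of `g` on `[a,b]`. -/
noncomputable def omega1 (g : ℝ → ℝ) (t a b : ℝ) : ℝ :=
  sSup {v : ℝ | ∃ x y : ℝ, x ∈ Set.Icc a b ∧ y ∈ Set.Icc a b ∧ |x - y| ≤ t ∧ v = |g x - g y|}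

/-- Sup norm on `[a,b]`. -/
noncomputable def supNorm (g : ℝ → ℝ) (a b : ℝ) : ℝ :=
  sSup {v : ℝ | ∃ x ∈ Set.Icc a b, v = |g x|}

/-- The knots extended by `x₋₁ = x₀ - (xₘ - x₀)` and `x_{m+1} = xₘ + (xₘ - x₀)`. -/
noncomputable def xExt (m : ℕ) (x : ℕ → ℝ) : ℤ → ℝ := fun i =>
  if i < 0 then x 0 - (x m - x 0) else if (m : ℤ) < i then x m + (x m - x 0) else x i.toNat

/-- `d(p,q) = min (x_{q+1} - x_p) (x_q - x_{p-1})`. -/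
noncomputable def dpq (m : ℕ) (x : ℕ → ℝ) (p q : ℕ) : ℝ :=
  min (xExt m x ((q : ℤ) + 1) - x p) (x q - xExt m x ((p : ℤ) - 1))

/-- `Λ_{p,q,r}(x_0,…,x_m; φ)`. -/
noncomputable def Lam (m r : ℕ) (x : ℕ → ℝ) (φ : ℝ → ℝ) (p q : ℕ) : ℝ :=
  (∫ u in Set.Ioc (x q - x p) (dpq m x p q), u ^ ((p : ℤ) + r - q - 1) * φ u) /
    ((∏ i ∈ Finset.range p, (x q - x i)) * ∏ i ∈ Finset.Ioc q m, (x i - x p))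

/-- `Λ_r(x_0,…,x_m; φ) = max over admissible (p,q) of Λ_{p,q,r}`. -/
noncomputable def LamMax (m r : ℕ) (x : ℕ → ℝ) (φ : ℝ → ℝ) : ℝ :=
  sSup {v : ℝ | ∃ p q : ℕ, q ≤ m ∧ p + r + 1 ≤ q ∧ v = Lam m r x φ p q}



open MeasureTheory intervalIntegral Set Polynomial
open scoped fwdDiff Nat

/-!
Write `S_h g x = ∫₀¹ g (x + h s) ds` and `η = (b - a) / (4k²)`. The Steklov smoothing
`f_η = ∑_{i=1}^k (-1)^(i+1) C(k,i) S_{iη}^k f` is `C^k` with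
`f_η^(k) = ∑_{i=1}^k (-1)^(i+1) C(k,i) Δ_{iη}^k f / (iη)^k`, so `|f_η^(k)| ≤ 2^k ω_k / η^k`; and
`f - f_η = ∑_{i=0}^k (-1)^i C(k,i) S_{iη}^k f` is an iterated average of `k`-th differences of `f`,
so `|f - f_η| ≤ ω_k`. All the points involved lie in `[x, x + (b - a) / 4]`, so Taylor's theorem
for `f_η` gives a polynomial within `C ω_k` of `f` on the left three quarters of `[a, b]`, and the
reflection `x ↦ a + b - x` gives one on the right three quarters. Their difference is `O(ω_k)` on
the middle half, hence, by Lagrange interpolation at `k` equally spaced nodes, on all of `[a, b]`.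
-/

lemma Continuous.fwdDiff {M G : Type*} [TopologicalSpace M] [AddCommMonoid M] [ContinuousAdd M]
    [TopologicalSpace G] [AddCommGroup G] [IsTopologicalAddGroup G] {g : M → G} (hg : Continuous g)
    (h : M) : Continuous (Δ_[h] g) :=
  (hg.comp (continuous_add_const h)).sub hg

lemma neg_one_pow_eq_mul_neg_one_pow_sub {R : Type*} [Monoid R] [HasDistribNeg R] {i k : ℕ}
    (h : i ≤ k) : (-1 : R) ^ i = (-1) ^ k * (-1) ^ (k - i) := by
  obtain ⟨j, rfl⟩ := Nat.exists_eq_add_of_le h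
  rw [Nat.add_sub_cancel_left, pow_add, mul_assoc, ← pow_add, ← two_mul, pow_mul, neg_one_sq,
    one_pow, mul_one]

lemma sum_range_choose_succ_le (k : ℕ) : ∑ i ∈ Finset.range k, k.choose (i + 1) ≤ 2 ^ k := by
  rw [← Nat.sum_range_choose k, Finset.sum_range_succ' _ k]
  exact Nat.le_add_right _ _

-- The Steklov average `h⁻¹ ∫_x^{x+h} g`, parametrised over `[0, 1]` so that step `0` gives `g`.
noncomputable def steklov (h : ℝ) (g : ℝ → ℝ) (x : ℝ) : ℝ :=
  ∫ s in (0 : ℝ)..1, g (x + h * s)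

section Steklov

variable {h : ℝ} {g : ℝ → ℝ}

@[simp]
lemma steklov_zero : steklov 0 = id := by
  funext g x
  simp [steklov]

lemma steklov_eq_integral_div (hh : h ≠ 0) (g : ℝ → ℝ) (x : ℝ) :
    steklov h g x = (∫ t in x..x + h, g t) / h := by
  rw [steklov, integral_comp_add_mul g hh x]
  simp [div_eq_inv_mul]

lemma continuous_steklov (hg : Continuous g) : Continuous (steklov h g) :=
  continuous_parametric_intervalIntegral_of_continuous' (by fun_prop) 0 1

lemma hasDerivAt_steklov (hh : h ≠ 0) (hg : Continuous g) (x : ℝ) :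
    HasDerivAt (steklov h g) (Δ_[h] g x / h) x := by
  have hprim : ∀ y, HasDerivAt (fun u => ∫ t in (0 : ℝ)..u, g t) (g y) y := fun y =>
    integral_hasDerivAt_right (hg.intervalIntegrable _ _) (hg.stronglyMeasurableAtFilter _ _)
      hg.continuousAt
  have hsub : steklov h g =
      fun y => ((∫ t in (0 : ℝ)..y + h, g t) - ∫ t in (0 : ℝ)..y, g t) / h := by
    funext y
    rw [steklov_eq_integral_div hh, integral_interval_sub_left (hg.intervalIntegrable _ _)
      (hg.intervalIntegrable _ _)]
  rw [hsub]
  show HasDerivAt _ ((g (x + h) - g x) / h) x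
  simpa using (((hprim (x + h)).comp x ((hasDerivAt_id x).add_const h)).sub (hprim x)).div_const h

lemma steklov_fwdDiff (hg : Continuous g) : steklov h (Δ_[h] g) = Δ_[h] (steklov h g) := by
  funext x
  simp only [steklov, fwdDiff]
  have hint : ∀ c, IntervalIntegrable (fun s => g (c + h * s)) volume 0 1 := fun c =>
    (hg.comp (by fun_prop)).intervalIntegrable _ _
  rw [← intervalIntegral.integral_sub (hint _) (hint _)]
  congr 1 with s
  ring_nf

lemma continuous_iterate_steklov (hg : Continuous g) (m : ℕ) : Continuous ((steklov h)^[m] g) := by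
  induction m with
  | zero => exact hg
  | succ m ih => simpa only [Function.iterate_succ_apply'] using continuous_steklov ih

lemma fwdDiff_iterate_steklov (hg : Continuous g) (m : ℕ) :
    Δ_[h] ((steklov h)^[m] g) = (steklov h)^[m] (Δ_[h] g) := by
  induction m with
  | zero => rfl
  | succ m ih =>
    simp only [Function.iterate_succ_apply']
    rw [← steklov_fwdDiff (continuous_iterate_steklov hg m), ih]

lemma deriv_iterate_steklov_succ (hh : h ≠ 0) (hg : Continuous g) (m : ℕ) :
    deriv ((steklov h)^[m + 1] g) = fun x => (steklov h)^[m] (Δ_[h] g) x / h := by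
  funext x
  rw [Function.iterate_succ_apply',
    (hasDerivAt_steklov hh (continuous_iterate_steklov hg m) x).deriv, fwdDiff_iterate_steklov hg]

lemma contDiff_iterate_steklov (hh : h ≠ 0) (m : ℕ) (hg : Continuous g) :
    ContDiff ℝ m ((steklov h)^[m] g) := by
  induction m generalizing g with
  | zero => simpa using hg
  | succ m ih =>
    have hd : ContDiff ℝ ((m : WithTop ℕ∞) + 1) ((steklov h)^[m + 1] g) := by
      refine contDiff_succ_iff_deriv.2 ⟨fun x => ?_, by simp, ?_⟩
      · rw [Function.iterate_succ_apply']
        exact (hasDerivAt_steklov hh (continuous_iterate_steklov hg m) x).differentiableAt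
      · rw [deriv_iterate_steklov_succ hh hg]
        exact (ih (hg.fwdDiff _)).div_const h
    exact_mod_cast hd

lemma iteratedDeriv_iterate_steklov (hh : h ≠ 0) (m : ℕ) (hg : Continuous g) :
    iteratedDeriv m ((steklov h)^[m] g) = fun x => (fwdDiff h)^[m] g x / h ^ m := by
  induction m generalizing g with
  | zero => simp
  | succ m ih =>
    funext x
    have hmul : (fun y => (steklov h)^[m] (Δ_[h] g) y / h) =
        fun y => h⁻¹ * (steklov h)^[m] (Δ_[h] g) y := by
      simp only [div_eq_inv_mul]
    rw [iteratedDeriv_succ', deriv_iterate_steklov_succ hh hg, hmul, iteratedDeriv_const_mul_field,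
      ih (hg.fwdDiff h), Function.iterate_succ_apply, pow_succ']
    field_simp

end Steklov

section Lagrange

variable {ι : Type*} [DecidableEq ι] {s : Finset ι} {v : ι → ℝ} {x δ R : ℝ}

lemma abs_eval_lagrange_basis_le {i : ι} (hi : i ∈ s) (hδ : 0 < δ)
    (hsep : ∀ j ∈ s, j ≠ i → δ ≤ |v i - v j|) (hR : ∀ j ∈ s, |x - v j| ≤ R) :
    |(Lagrange.basis s v i).eval x| ≤ (R / δ) ^ (s.card - 1) := by
  rw [Lagrange.basis, eval_prod, Finset.abs_prod, ← Finset.card_erase_of_mem hi,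
    ← Finset.prod_const]
  refine Finset.prod_le_prod (fun _ _ => abs_nonneg _) fun j hj => ?_
  obtain ⟨hji, hj⟩ := Finset.mem_erase.1 hj
  rw [Lagrange.basisDivisor, eval_mul, eval_C, eval_sub, eval_X, eval_C, abs_mul, abs_inv,
    inv_mul_eq_div]
  exact div_le_div₀ ((abs_nonneg _).trans (hR j hj)) (hR j hj) hδ (hsep j hj hji)

lemma abs_eval_le_of_forall_abs_eval_node_le {p : ℝ[X]} (hp : p.degree < s.card) (hδ : 0 < δ)
    (hsep : ∀ i ∈ s, ∀ j ∈ s, j ≠ i → δ ≤ |v i - v j|) (hR : ∀ j ∈ s, |x - v j| ≤ R) {M : ℝ}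
    (hM : ∀ i ∈ s, |p.eval (v i)| ≤ M) :
    |p.eval x| ≤ s.card * (R / δ) ^ (s.card - 1) * M := by
  have hinj : InjOn v s := fun i hi j hj hij => by
    by_contra hne
    have := hsep i hi j hj (Ne.symm hne)
    rw [hij, sub_self, abs_zero] at this
    linarith
  rw [Lagrange.eq_interpolate hinj hp, Lagrange.interpolate_apply, eval_finsetSum]
  calc _ ≤ ∑ i ∈ s, |(C (p.eval (v i)) * Lagrange.basis s v i).eval x| :=
        Finset.abs_sum_le_sum_abs _ _
    _ ≤ ∑ _i ∈ s, M * (R / δ) ^ (s.card - 1) := by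
        refine Finset.sum_le_sum fun i hi => ?_
        rw [eval_mul, eval_C, abs_mul]
        exact mul_le_mul (hM i hi) (abs_eval_lagrange_basis_le hi hδ (hsep i hi) hR)
          (abs_nonneg _) ((abs_nonneg _).trans (hM i hi))
    _ = s.card * (R / δ) ^ (s.card - 1) * M := by
        rw [Finset.sum_const, nsmul_eq_mul]
        ring

end Lagrange

lemma abs_eval_le_of_abs_eval_le_on_Icc {p : ℝ[X]} {k : ℕ} (hp : p.natDegree < k) {c d M R x : ℝ}
    (hcd : c < d) (hM : ∀ y ∈ Icc c d, |p.eval y| ≤ M) (hR : ∀ y ∈ Icc c d, |x - y| ≤ R) :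
    |p.eval x| ≤ k * (k * R / (d - c)) ^ (k - 1) * M := by
  have hk : (0 : ℝ) < k := by exact_mod_cast (Nat.zero_le _).trans_lt hp
  set δ := (d - c) / k with hδ
  have hδpos : 0 < δ := div_pos (sub_pos.2 hcd) hk
  have hnode : ∀ j ∈ Finset.range k, c + j * δ ∈ Icc c d := fun j hj => by
    have hjk : (j : ℝ) ≤ k := by exact_mod_cast (Finset.mem_range.1 hj).le
    have hkδ : k * δ = d - c := by rw [hδ]; field_simp
    constructor <;> nlinarith [(Nat.cast_nonneg j : (0 : ℝ) ≤ j)]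
  have hsep : ∀ i ∈ Finset.range k, ∀ j ∈ Finset.range k, j ≠ i →
      δ ≤ |(c + i * δ) - (c + j * δ)| := fun i _ j _ hji => by
    have hij : ((i : ℤ) - j) ≠ 0 := by omega
    have hone : (1 : ℝ) ≤ |(i : ℝ) - j| := by exact_mod_cast Int.one_le_abs hij
    rw [add_sub_add_left_eq_sub, ← sub_mul, abs_mul, abs_of_pos hδpos]
    nlinarith
  have hdeg : p.degree < (Finset.range k).card := by
    rw [Finset.card_range]
    exact (degree_le_natDegree).trans_lt (by exact_mod_cast hp)
  have hbound := abs_eval_le_of_forall_abs_eval_node_le hdeg hδpos hsep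
    (fun j hj => hR _ (hnode j hj)) (fun i hi => hM _ (hnode i hi))
  rwa [Finset.card_range, hδ, div_div_eq_mul_div, mul_comm R] at hbound

lemma abs_eval_le_of_abs_eval_le_on_middle_half {p : ℝ[X]} {k : ℕ} (hp : p.natDegree < k)
    {a b M x : ℝ} (hab : a < b)
    (hM : ∀ y ∈ Icc (a + (b - a) / 4) (b - (b - a) / 4), |p.eval y| ≤ M) (hx : x ∈ Icc a b) :
    |p.eval x| ≤ k * (2 * k) ^ (k - 1) * M := by
  have h := abs_eval_le_of_abs_eval_le_on_Icc (R := b - a) (x := x) hp (by linarith) hM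
    fun y hy => abs_sub_le_iff.2 ⟨by linarith [hx.2, hy.1], by linarith [hx.1, hy.2]⟩
  have hratio : (k : ℝ) * (b - a) / (b - (b - a) / 4 - (a + (b - a) / 4)) = 2 * k := by
    have : b - a ≠ 0 := (sub_pos.2 hab).ne'
    rw [show b - (b - a) / 4 - (a + (b - a) / 4) = (b - a) / 2 by ring]
    field_simp
  rwa [hratio] at h

lemma exists_natDegree_le_eval_eq_taylorWithinEval (f : ℝ → ℝ) (n : ℕ) (s : Set ℝ) (x₀ : ℝ) :
    ∃ P : ℝ[X], P.natDegree ≤ n ∧ ∀ x, P.eval x = taylorWithinEval f n s x₀ x := by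
  refine ⟨∑ j ∈ Finset.range (n + 1), C (iteratedDerivWithin j f s x₀ / j !) * (X - C x₀) ^ j,
    natDegree_sum_le_of_forall_le _ _ fun j hj => ?_, fun x => ?_⟩
  · refine (natDegree_C_mul_le _ _).trans (natDegree_pow_le.trans ?_)
    rw [natDegree_X_sub_C, mul_one]
    exact Finset.mem_range_succ_iff.1 hj
  · simp only [taylor_within_apply, eval_finsetSum, eval_mul, eval_C, eval_pow, eval_sub, eval_X,
      smul_eq_mul]
    refine Finset.sum_congr rfl fun j _ => ?_
    ring

lemma exists_polynomial_abs_sub_le_of_abs_iteratedDeriv_le {g : ℝ → ℝ} {n : ℕ} {a b C : ℝ}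
    (hab : a < b) (hg : ContDiff ℝ (n + 1) g)
    (hC : ∀ y ∈ Icc a b, |iteratedDeriv (n + 1) g y| ≤ C) :
    ∃ P : ℝ[X], P.natDegree ≤ n ∧
      ∀ x ∈ Icc a b, |g x - P.eval x| ≤ C * (x - a) ^ (n + 1) / n ! := by
  obtain ⟨P, hPdeg, hP⟩ := exists_natDegree_le_eval_eq_taylorWithinEval g n (Icc a b) a
  refine ⟨P, hPdeg, fun x hx => ?_⟩
  rw [hP]
  refine taylor_mean_remainder_bound hab.le hg.contDiffOn hx fun y hy => ?_
  rw [iteratedDerivWithin_eq_iteratedDeriv (uniqueDiffOn_Icc hab) hg.contDiffAt hy]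
  exact hC y hy

lemma supNorm_nonneg (g : ℝ → ℝ) (a b : ℝ) : 0 ≤ supNorm g a b :=
  Real.sSup_nonneg (by rintro v ⟨x, -, rfl⟩; positivity)

lemma supNorm_le {g : ℝ → ℝ} {a b M : ℝ} (hM : 0 ≤ M) (hg : ∀ x ∈ Icc a b, |g x| ≤ M) :
    supNorm g a b ≤ M :=
  Real.sSup_le (by rintro v ⟨x, hx, rfl⟩; exact hg x hx) hM

section ModulusOfSmoothness

variable {k : ℕ} {f g : ℝ → ℝ} {a b u : ℝ}

lemma kSymmDiff_node_mem {i : ℕ} (hik : i ≤ k) {x : ℝ} (hu : 0 < u)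
    (hxa : a ≤ x - (k / 2 : ℝ) * u) (hxb : x + (k / 2 : ℝ) * u ≤ b) :
    x + ((k : ℝ) / 2 - i) * u ∈ Icc a b := by
  have : (i : ℝ) ≤ k := by exact_mod_cast hik
  constructor <;> nlinarith [(Nat.cast_nonneg i : (0 : ℝ) ≤ i)]

lemma kSymmDiff_congr (hfg : EqOn f g (Icc a b)) (hu : 0 < u) (x : ℝ) :
    kSymmDiff k f u x a b = kSymmDiff k g u x a b := by
  unfold kSymmDiff
  split_ifs with hx
  · exact Finset.sum_congr rfl fun i hi => by
      rw [hfg (kSymmDiff_node_mem (Finset.mem_range_succ_iff.1 hi) hu hx.1 hx.2)]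
  · rfl

lemma smoothOmega_congr (hfg : EqOn f g (Icc a b)) (t : ℝ) :
    smoothOmega k f t a b = smoothOmega k g t a b := by
  unfold smoothOmega
  congr 1
  ext v
  constructor <;> rintro ⟨u, x, hu, hut, rfl⟩ <;>
    exact ⟨u, x, hu, hut, by rw [kSymmDiff_congr hfg hu]⟩

lemma kSymmDiff_comp_reflect (u x : ℝ) :
    kSymmDiff k (fun y => f (a + b - y)) u x a b = (-1) ^ k * kSymmDiff k f u (a + b - x) a b := by
  unfold kSymmDiff
  have hwin : (a ≤ x - (k / 2 : ℝ) * u ∧ x + (k / 2 : ℝ) * u ≤ b) ↔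
      (a ≤ a + b - x - (k / 2 : ℝ) * u ∧ a + b - x + (k / 2 : ℝ) * u ≤ b) := by
    constructor <;> rintro ⟨h₁, h₂⟩ <;> constructor <;> linarith
  by_cases hx : a ≤ x - (k / 2 : ℝ) * u ∧ x + (k / 2 : ℝ) * u ≤ b
  · rw [if_pos hx, if_pos (hwin.1 hx), Finset.mul_sum, ← Finset.sum_range_reflect]
    refine Finset.sum_congr rfl fun j hj => ?_
    have hjk : j ≤ k := Finset.mem_range_succ_iff.1 hj
    rw [Nat.add_sub_cancel, Nat.choose_symm hjk, Nat.cast_sub hjk,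
      neg_one_pow_eq_mul_neg_one_pow_sub (Nat.sub_le k j), Nat.sub_sub_self hjk]
    ring_nf
  · rw [if_neg hx, if_neg (mt hwin.2 hx), mul_zero]

lemma smoothOmega_comp_reflect (t : ℝ) :
    smoothOmega k (fun y => f (a + b - y)) t a b = smoothOmega k f t a b := by
  have habs : ∀ u x, |kSymmDiff k (fun y => f (a + b - y)) u x a b| =
      |kSymmDiff k f u (a + b - x) a b| := fun u x => by
    rw [kSymmDiff_comp_reflect, abs_mul, abs_neg_one_pow, one_mul]
  unfold smoothOmega
  congr 1
  ext v
  constructor <;> rintro ⟨u, x, hu, hut, rfl⟩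
  · exact ⟨u, a + b - x, hu, hut, habs u x⟩
  · exact ⟨u, a + b - x, hu, hut, by rw [habs, sub_sub_cancel]⟩

lemma abs_kSymmDiff_le {M : ℝ} (hM0 : 0 ≤ M) (hM : ∀ y ∈ Icc a b, |f y| ≤ M) (hu : 0 < u)
    (x : ℝ) : |kSymmDiff k f u x a b| ≤ 2 ^ k * M := by
  unfold kSymmDiff
  split_ifs with hx
  · calc _ ≤ ∑ i ∈ Finset.range (k + 1), |(-1 : ℝ) ^ i * k.choose i * f (x + (k / 2 - i) * u)| :=
          Finset.abs_sum_le_sum_abs _ _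
      _ ≤ ∑ i ∈ Finset.range (k + 1), (k.choose i : ℝ) * M := by
          refine Finset.sum_le_sum fun i hi => ?_
          rw [abs_mul, abs_mul, abs_neg_one_pow, one_mul, Nat.abs_cast]
          gcongr
          exact hM _ (kSymmDiff_node_mem (Finset.mem_range_succ_iff.1 hi) hu hx.1 hx.2)
      _ = 2 ^ k * M := by
          rw [← Finset.sum_mul, ← Nat.cast_sum, Nat.sum_range_choose, Nat.cast_pow, Nat.cast_ofNat]
  · simpa using by positivity

lemma bddAbove_abs_kSymmDiff (hf : ContinuousOn f (Icc a b)) (t : ℝ) :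
    BddAbove {v : ℝ | ∃ u x : ℝ, 0 < u ∧ u ≤ t ∧ v = |kSymmDiff k f u x a b|} := by
  obtain ⟨M, hM⟩ := isCompact_Icc.exists_bound_of_continuousOn hf
  refine ⟨2 ^ k * max M 0, ?_⟩
  rintro v ⟨u, x, hu, -, rfl⟩
  exact abs_kSymmDiff_le (le_max_right M 0) (fun y hy => (hM y hy).trans (le_max_left M 0)) hu x

lemma smoothOmega_nonneg (k : ℕ) (f : ℝ → ℝ) (t a b : ℝ) : 0 ≤ smoothOmega k f t a b :=
  Real.sSup_nonneg (by rintro v ⟨u, x, -, -, rfl⟩; positivity)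

lemma abs_fwdDiff_iterate_le_smoothOmega (hf : ContinuousOn f (Icc a b)) {t y : ℝ} (hu : 0 < u)
    (hut : u ≤ t) (hay : a ≤ y) (hyb : y + k * u ≤ b) :
    |(fwdDiff u)^[k] f y| ≤ smoothOmega k f t a b := by
  refine le_csSup (bddAbove_abs_kSymmDiff hf t) ⟨u, y + (k / 2 : ℝ) * u, hu, hut, ?_⟩
  rw [kSymmDiff, if_pos ⟨by linarith, by linarith⟩, fwdDiff_iter_eq_sum_shift,
    ← Finset.sum_range_reflect]
  congr 1
  refine Finset.sum_congr rfl fun j hj => ?_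
  have hjk : j ≤ k := Finset.mem_range_succ_iff.1 hj
  rw [Nat.add_sub_cancel, Nat.sub_sub_self hjk, Nat.choose_symm hjk, zsmul_eq_mul, nsmul_eq_mul,
    Nat.cast_sub hjk]
  push_cast
  ring_nf

end ModulusOfSmoothness

section WhitneySmoothing

variable (k : ℕ) (η : ℝ) (f : ℝ → ℝ)

-- An average of `(-1)^k Δ_u^k f x` over steps `u ∈ [v, v + m η]`.
noncomputable def whitneyDiff (m : ℕ) (v x : ℝ) : ℝ :=
  ∑ i ∈ Finset.range (k + 1), (-1) ^ i * k.choose i * (steklov (i * η))^[m] f (x + i * v)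

noncomputable def whitneySmoothing (x : ℝ) : ℝ :=
  ∑ i ∈ Finset.range k, (-1) ^ i * k.choose (i + 1) * (steklov ((i + 1) * η))^[k] f x

variable {k η f}

lemma whitneyDiff_zero (v x : ℝ) : whitneyDiff k η f 0 v x = (-1) ^ k * (fwdDiff v)^[k] f x := by
  rw [whitneyDiff, fwdDiff_iter_eq_sum_shift, Finset.mul_sum]
  refine Finset.sum_congr rfl fun i hi => ?_
  rw [neg_one_pow_eq_mul_neg_one_pow_sub (Finset.mem_range_succ_iff.1 hi), zsmul_eq_mul,
    nsmul_eq_mul, Function.iterate_zero_apply]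
  push_cast
  ring

lemma whitneyDiff_succ (hf : Continuous f) (m : ℕ) (v x : ℝ) :
    whitneyDiff k η f (m + 1) v x = ∫ s in (0 : ℝ)..1, whitneyDiff k η f m (v + η * s) x := by
  simp only [whitneyDiff, Function.iterate_succ_apply', steklov]
  rw [intervalIntegral.integral_finsetSum fun i _ => ?_]
  · refine Finset.sum_congr rfl fun i _ => ?_
    rw [← intervalIntegral.integral_const_mul]
    congr 1 with s
    ring_nf
  · exact Continuous.intervalIntegrable
      (continuous_const.mul ((continuous_iterate_steklov hf m).comp (by fun_prop))) _ _

lemma abs_whitneyDiff_le (hf : Continuous f) (hη : 0 < η) {a b t x : ℝ} (hkη : k * η ≤ t)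
    (hax : a ≤ x) (hxb : x + k * (k * η) ≤ b) (m : ℕ) {v : ℝ} (hv : 0 ≤ v) (hvm : 0 < v + m * η)
    (hvk : v + m * η ≤ k * η) : |whitneyDiff k η f m v x| ≤ smoothOmega k f t a b := by
  induction m generalizing v with
  | zero =>
    simp only [Nat.cast_zero, zero_mul, add_zero] at hvm hvk
    rw [whitneyDiff_zero, abs_mul, abs_neg_one_pow, one_mul]
    refine abs_fwdDiff_iterate_le_smoothOmega hf.continuousOn hvm (hvk.trans hkη) hax ?_
    nlinarith [(Nat.cast_nonneg k : (0 : ℝ) ≤ k)]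
  | succ m ih =>
    rw [whitneyDiff_succ hf, ← Real.norm_eq_abs]
    have hbound : ∀ s ∈ uIoc (0 : ℝ) 1,
        ‖whitneyDiff k η f m (v + η * s) x‖ ≤ smoothOmega k f t a b := by
      intro s hs
      rw [uIoc_of_le zero_le_one] at hs
      push_cast at hvk
      exact ih (by nlinarith [hs.1]) (by nlinarith [hs.1]) (by nlinarith [hs.2])
    simpa using intervalIntegral.norm_integral_le_of_norm_le_const hbound

lemma sub_whitneySmoothing_eq (x : ℝ) :
    f x - whitneySmoothing k η f x = whitneyDiff k η f k 0 x := by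
  rw [whitneyDiff, Finset.sum_range_succ', whitneySmoothing, sub_eq_neg_add,
    ← Finset.sum_neg_distrib]
  simp only [Nat.cast_zero, zero_mul, steklov_zero, Function.iterate_id, id_eq, mul_zero, add_zero,
    pow_zero, Nat.choose_zero_right, Nat.cast_one, one_mul]
  congr 1
  refine Finset.sum_congr rfl fun i _ => ?_
  push_cast
  ring

lemma contDiff_whitneySmoothing (hη : 0 < η) (hf : Continuous f) :
    ContDiff ℝ k (whitneySmoothing k η f) :=
  ContDiff.sum fun i _ => contDiff_const.mul (contDiff_iterate_steklov (by positivity) k hf)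

lemma iteratedDeriv_whitneySmoothing (hη : 0 < η) (hf : Continuous f) (x : ℝ) :
    iteratedDeriv k (whitneySmoothing k η f) x = ∑ i ∈ Finset.range k,
      (-1) ^ i * k.choose (i + 1) * ((fwdDiff ((i + 1) * η))^[k] f x / ((i + 1) * η) ^ k) := by
  have hcd : ∀ i : ℕ, ContDiff ℝ k ((steklov ((i + 1) * η))^[k] f) := fun i =>
    contDiff_iterate_steklov (by positivity) k hf
  unfold whitneySmoothing
  rw [iteratedDeriv_fun_sum fun i _ => (contDiff_const.mul (hcd i)).contDiffAt]
  refine Finset.sum_congr rfl fun i _ => ?_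
  rw [iteratedDeriv_const_mul_field, iteratedDeriv_iterate_steklov (by positivity) k hf]

lemma abs_iteratedDeriv_whitneySmoothing_le (hf : Continuous f) (hη : 0 < η) {a b t y : ℝ}
    (hkη : k * η ≤ t) (hay : a ≤ y) (hyb : y + k * (k * η) ≤ b) :
    |iteratedDeriv k (whitneySmoothing k η f) y| ≤ 2 ^ k * smoothOmega k f t a b / η ^ k := by
  set W := smoothOmega k f t a b
  rw [iteratedDeriv_whitneySmoothing hη hf]
  calc _ ≤ ∑ i ∈ Finset.range k, |(-1) ^ i * k.choose (i + 1) *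
        ((fwdDiff ((i + 1) * η))^[k] f y / ((i + 1) * η) ^ k)| := Finset.abs_sum_le_sum_abs _ _
    _ ≤ ∑ i ∈ Finset.range k, (k.choose (i + 1) : ℝ) * (W / η ^ k) := by
        refine Finset.sum_le_sum fun i hi => ?_
        have hik : (i : ℝ) + 1 ≤ k := by exact_mod_cast Finset.mem_range.1 hi
        have hu : 0 < ((i : ℝ) + 1) * η := by positivity
        have hstep : (k : ℝ) * ((i + 1) * η) ≤ k * (k * η) := by gcongr
        have hΔ : |(fwdDiff ((i + 1) * η))^[k] f y| ≤ W :=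
          abs_fwdDiff_iterate_le_smoothOmega hf.continuousOn hu (by nlinarith) hay (by linarith)
        rw [abs_mul, abs_mul, abs_neg_one_pow, one_mul, Nat.abs_cast, abs_div,
          abs_of_pos (pow_pos hu k)]
        gcongr
        · exact (abs_nonneg _).trans hΔ
        · nlinarith
    _ = (∑ i ∈ Finset.range k, k.choose (i + 1) : ℕ) * (W / η ^ k) := by
        rw [← Finset.sum_mul]
        push_cast
        rfl
    _ ≤ 2 ^ k * W / η ^ k := by
        rw [mul_div_assoc]
        gcongr
        · exact div_nonneg (smoothOmega_nonneg _ _ _ _ _) (by positivity)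
        · exact_mod_cast sum_range_choose_succ_le k

end WhitneySmoothing

section WhitneyEstimate

variable {k : ℕ} {f : ℝ → ℝ} {a b : ℝ}

lemma exists_polynomial_abs_sub_le_left (hk : 1 ≤ k) (hf : Continuous f) (hab : a < b) :
    ∃ P : ℝ[X], P.natDegree ≤ k - 1 ∧ ∀ x ∈ Icc a (b - (b - a) / 4),
      |f x - P.eval x| ≤ (1 + 2 ^ k * (4 * k ^ 2) ^ k) * smoothOmega k f (b - a) a b := by
  set W := smoothOmega k f (b - a) a b
  set η := (b - a) / (4 * k ^ 2) with hη
  have hk' : (1 : ℝ) ≤ k := by exact_mod_cast hk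
  have hηpos : 0 < η := by positivity
  have hwin : (k : ℝ) * (k * η) = (b - a) / 4 := by rw [hη]; field_simp
  have hkη : k * η ≤ b - a := by nlinarith
  obtain ⟨n, rfl⟩ : ∃ n, k = n + 1 := ⟨k - 1, by omega⟩
  obtain ⟨P, hPdeg, hP⟩ := exists_polynomial_abs_sub_le_of_abs_iteratedDeriv_le (n := n)
    (by linarith : a < b - (b - a) / 4) (by exact_mod_cast contDiff_whitneySmoothing hηpos hf)
    fun y hy =>
      abs_iteratedDeriv_whitneySmoothing_le (b := b) hf hηpos hkη hy.1 (by linarith [hy.2])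
  refine ⟨P, by simpa using hPdeg, fun x hx => ?_⟩
  have hsmooth : |f x - whitneySmoothing (n + 1) η f x| ≤ W := by
    rw [sub_whitneySmoothing_eq]
    exact abs_whitneyDiff_le hf hηpos hkη hx.1 (by linarith [hx.2]) _ le_rfl
      (by rw [zero_add]; positivity) (by rw [zero_add])
  have htaylor : 2 ^ (n + 1) * W / η ^ (n + 1) * (x - a) ^ (n + 1) / n ! ≤
      2 ^ (n + 1) * (4 * ((n + 1 : ℕ) : ℝ) ^ 2) ^ (n + 1) * W := by
    have hW : 0 ≤ W := smoothOmega_nonneg _ _ _ _ _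
    calc _ ≤ 2 ^ (n + 1) * W / η ^ (n + 1) * (b - a) ^ (n + 1) := by
          refine (div_le_self (by have := hx.1; positivity)
            (by exact_mod_cast n.factorial_pos)).trans ?_
          gcongr
          · linarith [hx.1]
          · linarith [hx.2]
      _ = _ := by
          have : b - a ≠ 0 := (sub_pos.2 hab).ne'
          rw [hη, div_pow]
          field_simp
  calc |f x - P.eval x| ≤ |f x - whitneySmoothing (n + 1) η f x| +
        |whitneySmoothing (n + 1) η f x - P.eval x| := abs_sub_le _ _ _
    _ ≤ W + 2 ^ (n + 1) * (4 * ((n + 1 : ℕ) : ℝ) ^ 2) ^ (n + 1) * W :=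
        add_le_add hsmooth ((hP x ⟨hx.1, hx.2⟩).trans htaylor)
    _ = _ := by ring

lemma exists_polynomial_abs_sub_le_right (hk : 1 ≤ k) (hf : Continuous f) (hab : a < b) :
    ∃ Q : ℝ[X], Q.natDegree ≤ k - 1 ∧ ∀ x ∈ Icc (a + (b - a) / 4) b,
      |f x - Q.eval x| ≤ (1 + 2 ^ k * (4 * k ^ 2) ^ k) * smoothOmega k f (b - a) a b := by
  obtain ⟨P, hPdeg, hP⟩ :=
    exists_polynomial_abs_sub_le_left hk (f := fun y => f (a + b - y)) (hf.comp (by fun_prop)) hab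
  refine ⟨P.comp (C (a + b) - X), ?_, fun x hx => ?_⟩
  · have hlin : (C (a + b) - X : ℝ[X]).natDegree ≤ 1 := (natDegree_sub_le _ _).trans (by simp)
    calc (P.comp (C (a + b) - X)).natDegree ≤ P.natDegree * (C (a + b) - X).natDegree :=
          natDegree_comp_le
      _ ≤ (k - 1) * 1 := Nat.mul_le_mul hPdeg hlin
      _ = k - 1 := mul_one _
  · have := hP (a + b - x) ⟨by linarith [hx.2], by linarith [hx.1]⟩
    simpa only [eval_comp, eval_sub, eval_C, eval_X, smoothOmega_comp_reflect, sub_sub_cancel]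
      using this

theorem exists_polynomial_abs_sub_le_smoothOmega (hk : 1 ≤ k) :
    ∃ c > 0, ∀ a b : ℝ, a < b → ∀ f : ℝ → ℝ, Continuous f → ∃ P : ℝ[X], P.natDegree ≤ k - 1 ∧
      ∀ x ∈ Icc a b, |f x - P.eval x| ≤ c * smoothOmega k f (b - a) a b := by
  set C₁ : ℝ := 1 + 2 ^ k * (4 * k ^ 2) ^ k
  set L : ℝ := k * (2 * k) ^ (k - 1)
  refine ⟨C₁ * (1 + 2 * L), by positivity, fun a b hab f hf => ?_⟩
  set W := smoothOmega k f (b - a) a b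
  have hW : 0 ≤ W := smoothOmega_nonneg _ _ _ _ _
  obtain ⟨P, hPdeg, hP⟩ := exists_polynomial_abs_sub_le_left hk hf hab
  obtain ⟨Q, hQdeg, hQ⟩ := exists_polynomial_abs_sub_le_right hk hf hab
  have hPQ : ∀ x ∈ Icc a b, |(P - Q).eval x| ≤ L * (2 * (C₁ * W)) := fun x =>
    abs_eval_le_of_abs_eval_le_on_middle_half ((natDegree_sub_le P Q).trans_lt (by omega)) hab
      fun y hy => by
        rw [eval_sub, two_mul]
        exact (abs_sub_le _ (f y) _).trans (add_le_add
          (by rw [abs_sub_comm]; exact hP y ⟨by linarith [hy.1], hy.2⟩)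
          (hQ y ⟨hy.1, by linarith [hy.2]⟩))
  refine ⟨P, hPdeg, fun x hx => ?_⟩
  rcases le_or_gt x (b - (b - a) / 4) with hxl | hxr
  · refine (hP x ⟨hx.1, hxl⟩).trans ?_
    have : 0 ≤ 2 * L := by positivity
    nlinarith [mul_nonneg (mul_nonneg (by positivity : (0 : ℝ) ≤ C₁) this) hW]
  · calc |f x - P.eval x| ≤ |f x - Q.eval x| + |(P - Q).eval x| := by
          rw [eval_sub, abs_sub_comm (P.eval x)]
          exact abs_sub_le _ _ _
      _ ≤ C₁ * W + L * (2 * (C₁ * W)) := add_le_add (hQ x ⟨by linarith, hx.2⟩) (hPQ x hx)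
      _ = C₁ * (1 + 2 * L) * W := by ring

end WhitneyEstimate

/-- the Whitney inequality. -/
theorem stmt13 (k : ℕ) (hk : 1 ≤ k) :
    ∃ c : ℝ, 0 < c ∧ ∀ a b : ℝ, a < b → ∀ F : ℝ → ℝ, ContinuousOn F (Set.Icc a b) →
      sInf {v : ℝ | ∃ P : Polynomial ℝ, P.natDegree ≤ k - 1 ∧
          v = supNorm (fun y => F y - P.eval y) a b} ≤
        c * smoothOmega k F (b - a) a b := by
  obtain ⟨c, hc, hwhitney⟩ := exists_polynomial_abs_sub_le_smoothOmega hk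
  refine ⟨c, hc, fun a b hab F hF => ?_⟩
  set f := IccExtend hab.le ((Icc a b).domRestrict F)
  have hfF : EqOn f F (Icc a b) := fun x hx => IccExtend_of_mem _ _ hx
  obtain ⟨P, hPdeg, hP⟩ :=
    hwhitney a b hab f (continuous_IccExtend_iff.2 (continuousOn_iff_continuous_domRestrict.1 hF))
  have hbdd : BddBelow {v : ℝ | ∃ P : ℝ[X], P.natDegree ≤ k - 1 ∧
      v = supNorm (fun y => F y - P.eval y) a b} :=
    ⟨0, by rintro v ⟨Q, -, rfl⟩; exact supNorm_nonneg _ _ _⟩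
  refine (csInf_le hbdd ⟨P, hPdeg, rfl⟩).trans
    (supNorm_le (mul_nonneg hc.le (smoothOmega_nonneg _ _ _ _ _)) fun x hx => ?_)
  rw [← smoothOmega_congr hfF, ← hfF hx]
  exact hP x hx
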